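/- The set of almost-Riordan arrays forms a group under the product (a,g,f)·(b,u,v) = ((a,g,f)·b, g·(u∘f), v∘f), with identity (1,1,x) and inverse (a,g,f)^{-1} = ((1,−g,f)^{-1}·a, 1/(g∘f̄), f̄). -/

import Mathlib

/-!
For `f` without constant term, `comp h f` is Mathlib's substitution `h.subst f` (the terms the
truncated sum drops vanish), so composition is multiplicative, associative, has `X` as a two-sided
unit, and `f` has a compositional inverse `f̄` as soon as `f₁ = 1`. Splitting off constant terms,
`act a g f (act b u v c) = act (act a g f b) (g * u ∘ f) (v ∘ f) c`, which gives associativity.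
For the inverse, that identity turns `(a,g,f)·((1,-ḡ,f̄)·a)` into `(a,-1,X)·a = a - X·ã = a₀ = 1`,
where `ḡ = 1/(g ∘ f̄)`.
-/

open PowerSeries Finset

/-- Shift: `shift h = (h - h₀)/x`, i.e. the series with coefficients `h₁, h₂, …`. -/
noncomputable def shift (h : PowerSeries ℤ) : PowerSeries ℤ :=
  PowerSeries.mk fun n => coeff (n + 1) h

/-- Composition `h ∘ f` of formal power series (intended for `f` with zero constant term,
in which case `coeff n (f ^ k) = 0` for `k > n`). -/
noncomputable def comp (h f : PowerSeries ℤ) : PowerSeries ℤ :=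
  PowerSeries.mk fun n => ∑ k ∈ Finset.range (n + 1), coeff k h * coeff n (f ^ k)

/-- Action of an almost-Riordan array `(a,g,f)` on a power series `b`:
`(a,g,f)·b = b₀ a + x g b̃(f)` where `b̃ = (b - b₀)/x`. -/
noncomputable def act (a g f b : PowerSeries ℤ) : PowerSeries ℤ :=
  C (coeff 0 b) * a + X * g * comp (shift b) f

/-- Product of almost-Riordan arrays: `(a,g,f)·(b,u,v) = ((a,g,f)·b, g·u(f), v(f))`. -/
noncomputable def arMul (t s : PowerSeries ℤ × PowerSeries ℤ × PowerSeries ℤ) :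
    PowerSeries ℤ × PowerSeries ℤ × PowerSeries ℤ :=
  (act t.1 t.2.1 t.2.2 s.1, t.2.1 * comp s.2.1 t.2.2, comp s.2.2 t.2.2)

/-- `(a,g,f)` is an almost-Riordan array: `a₀ = 1`, `g₀ = 1`, `f₀ = 0`, `f₁ = 1`. -/
def isAR (t : PowerSeries ℤ × PowerSeries ℤ × PowerSeries ℤ) : Prop :=
  coeff 0 t.1 = 1 ∧ coeff 0 t.2.1 = 1 ∧ coeff 0 t.2.2 = 0 ∧ coeff 1 t.2.2 = 1

lemma coeff_zero_mul {R : Type*} [Semiring R] (u v : R⟦X⟧) :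
    coeff 0 (u * v) = coeff 0 u * coeff 0 v := by
  simp

section Composition

variable {f : ℤ⟦X⟧}

lemma coeff_pow_of_lt (hf : coeff 0 f = 0) {n k : ℕ} (h : n < k) : coeff n (f ^ k) = 0 := by
  rw [coeff_zero_eq_constantCoeff_apply] at hf
  exact coeff_of_lt_order n <|
    (Nat.cast_lt.mpr h).trans_le (le_order_pow_of_constantCoeff_eq_zero k hf)

lemma hasSubst_of_coeff_zero (hf : coeff 0 f = 0) : HasSubst f :=
  HasSubst.of_constantCoeff_zero' (by rwa [← coeff_zero_eq_constantCoeff_apply])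

lemma comp_eq_subst (hf : coeff 0 f = 0) (h : ℤ⟦X⟧) : comp h f = h.subst f := by
  ext n
  rw [comp, coeff_mk, coeff_subst' (hasSubst_of_coeff_zero hf),
    finsum_eq_sum_of_support_subset _ (s := range (n + 1))]
  · rfl
  · intro k hk
    simp only [Function.mem_support, coe_range, Set.mem_Iio] at hk ⊢
    by_contra hnk
    exact hk (by rw [coeff_pow_of_lt hf (by omega), smul_zero])

lemma coeff_zero_comp (h f : ℤ⟦X⟧) : coeff 0 (comp h f) = coeff 0 h := by
  simp [comp]

lemma coeff_one_comp (h f : ℤ⟦X⟧) : coeff 1 (comp h f) = coeff 1 h * coeff 1 f := by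
  simp [comp, sum_range_succ]

lemma zero_comp (f : ℤ⟦X⟧) : comp 0 f = 0 := by
  ext n; simp [comp]

lemma one_comp (f : ℤ⟦X⟧) : comp 1 f = 1 := by
  ext n; simp [comp, coeff_one]

lemma add_comp (h₁ h₂ f : ℤ⟦X⟧) : comp (h₁ + h₂) f = comp h₁ f + comp h₂ f := by
  ext n; simp only [comp, coeff_mk, map_add, add_mul, sum_add_distrib]

lemma neg_comp (h f : ℤ⟦X⟧) : comp (-h) f = -comp h f := by
  ext n; simp only [comp, coeff_mk, map_neg, neg_mul, sum_neg_distrib]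

lemma C_mul_comp (c : ℤ) (h f : ℤ⟦X⟧) : comp (C c * h) f = C c * comp h f := by
  ext n; simp only [comp, coeff_mk, coeff_C_mul, mul_sum, mul_assoc]

lemma mul_comp (hf : coeff 0 f = 0) (h₁ h₂ : ℤ⟦X⟧) :
    comp (h₁ * h₂) f = comp h₁ f * comp h₂ f := by
  simp only [comp_eq_subst hf, subst_mul (hasSubst_of_coeff_zero hf)]

lemma comp_X (h : ℤ⟦X⟧) : comp h X = h := by
  rw [comp_eq_subst (by simp), X_subst]

lemma X_comp (hf : coeff 0 f = 0) : comp X f = f := by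
  rw [comp_eq_subst hf, subst_X (hasSubst_of_coeff_zero hf)]

lemma comp_comp {v : ℤ⟦X⟧} (hv : coeff 0 v = 0) (hf : coeff 0 f = 0) (h : ℤ⟦X⟧) :
    comp (comp h v) f = comp h (comp v f) := by
  have hvf : coeff 0 (comp v f) = 0 := by rw [coeff_zero_comp, hv]
  rw [comp_eq_subst hvf, comp_eq_subst hv, comp_eq_subst hf, comp_eq_subst hf,
    subst_comp_subst_apply (hasSubst_of_coeff_zero hv) (hasSubst_of_coeff_zero hf)]

lemma exists_comp_inverse (hf₀ : coeff 0 f = 0) (hf₁ : coeff 1 f = 1) :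
    ∃ f', coeff 0 f' = 0 ∧ coeff 1 f' = 1 ∧ comp f f' = X ∧ comp f' f = X := by
  have hf : constantCoeff f = 0 := by rwa [← coeff_zero_eq_constantCoeff_apply]
  have hunit : IsUnit (coeff 1 f) := hf₁ ▸ isUnit_one
  set f' := substInvOfIsUnit f hunit
  have hf'₀ : coeff 0 f' = 0 := by simp [f']
  have hf'f : comp f' f = X := by
    rw [comp_eq_subst hf₀, subst_substInvOfIsUnit_left f hf hunit]
  refine ⟨f', hf'₀, ?_, ?_, hf'f⟩
  · simpa [coeff_one_comp, hf₁] using congrArg (coeff 1) hf'f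
  · rw [comp_eq_subst hf'₀, subst_substInvOfIsUnit_right f hf hunit]

end Composition

section Shift

lemma X_mul_shift_add_C (h : ℤ⟦X⟧) : X * shift h + C (coeff 0 h) = h := by
  rw [coeff_zero_eq_constantCoeff_apply]
  exact (eq_X_mul_shift_add_const h).symm

lemma shift_add (h₁ h₂ : ℤ⟦X⟧) : shift (h₁ + h₂) = shift h₁ + shift h₂ := by
  ext n; simp [shift]

lemma shift_C_mul (c : ℤ) (h : ℤ⟦X⟧) : shift (C c * h) = C c * shift h := by
  ext n; simp only [shift, coeff_mk, coeff_C_mul]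

lemma shift_X_mul (h : ℤ⟦X⟧) : shift (X * h) = h := by
  ext n; simp [shift]

lemma shift_one : shift (1 : ℤ⟦X⟧) = 0 := by
  ext n; simp [shift, coeff_one]

end Shift

section Action

lemma coeff_zero_act (a g f b : ℤ⟦X⟧) : coeff 0 (act a g f b) = coeff 0 b * coeff 0 a := by
  simp [act]

lemma shift_act (a g f b : ℤ⟦X⟧) :
    shift (act a g f b) = C (coeff 0 b) * shift a + g * comp (shift b) f := by
  rw [act, shift_add, shift_C_mul, mul_assoc, shift_X_mul]

lemma act_act {f v : ℤ⟦X⟧} (hf : coeff 0 f = 0) (hv : coeff 0 v = 0) (a g b u c : ℤ⟦X⟧) :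
    act a g f (act b u v c) = act (act a g f b) (g * comp u f) (comp v f) c := by
  rw [act, coeff_zero_act, shift_act, add_comp, C_mul_comp, mul_comp hf, comp_comp hv hf,
    map_mul, act, act]
  ring

lemma act_one_one_X (b : ℤ⟦X⟧) : act 1 1 X b = b := by
  rw [act, comp_X, mul_one, mul_one, add_comm, X_mul_shift_add_C]

lemma act_one (a g f : ℤ⟦X⟧) : act a g f 1 = a := by
  simp [act, shift_one, zero_comp]

end Action

section Group

lemma isAR_arMul {t s : ℤ⟦X⟧ × ℤ⟦X⟧ × ℤ⟦X⟧} (ht : isAR t) (hs : isAR s) : isAR (arMul t s) := by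
  obtain ⟨ha, hg, hf₀, hf₁⟩ := ht
  obtain ⟨hb, hu, hv₀, hv₁⟩ := hs
  refine ⟨?_, ?_, ?_, ?_⟩
  · rw [arMul, coeff_zero_act, hb, ha, mul_one]
  · rw [arMul, coeff_zero_mul, coeff_zero_comp, hg, hu, mul_one]
  · rw [arMul, coeff_zero_comp, hv₀]
  · rw [arMul, coeff_one_comp, hv₁, hf₁, mul_one]

lemma arMul_assoc {t s : ℤ⟦X⟧ × ℤ⟦X⟧ × ℤ⟦X⟧} (ht : coeff 0 t.2.2 = 0) (hs : coeff 0 s.2.2 = 0)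
    (r : ℤ⟦X⟧ × ℤ⟦X⟧ × ℤ⟦X⟧) : arMul (arMul t s) r = arMul t (arMul s r) := by
  simp only [arMul, act_act ht hs, mul_comp ht, comp_comp hs ht, mul_assoc]

lemma isAR_one : isAR (1, 1, X) := by
  simp [isAR]

lemma one_arMul (t : ℤ⟦X⟧ × ℤ⟦X⟧ × ℤ⟦X⟧) : arMul (1, 1, X) t = t := by
  simp only [arMul, act_one_one_X, one_mul, comp_X]

lemma arMul_one {t : ℤ⟦X⟧ × ℤ⟦X⟧ × ℤ⟦X⟧} (ht : coeff 0 t.2.2 = 0) : arMul t (1, 1, X) = t := by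
  simp only [arMul, act_one, one_comp, mul_one, X_comp ht]

variable {a g f f' g' : ℤ⟦X⟧}

lemma isAR_inv (ha : coeff 0 a = 1) (hg : coeff 0 g = 1) (hf'₀ : coeff 0 f' = 0)
    (hf'₁ : coeff 1 f' = 1) (hg' : comp g f' * g' = 1) : isAR (act 1 (-g') f' a, g', f') := by
  refine ⟨by simp [coeff_zero_act, ha], ?_, hf'₀, hf'₁⟩
  have h₀ := congrArg (coeff 0) hg'
  rwa [coeff_zero_mul, coeff_zero_comp, hg, one_mul, coeff_zero_one] at h₀

lemma arMul_inv (ha : coeff 0 a = 1) (hf₀ : coeff 0 f = 0) (hf'₀ : coeff 0 f' = 0)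
    (hf'f : comp f' f = X) (hg' : comp g f' * g' = 1) :
    arMul (a, g, f) (act 1 (-g') f' a, g', f') = (1, 1, X) := by
  have hgg' : g * comp g' f = 1 := by
    simpa [mul_comp hf₀, comp_comp hf'₀ hf₀, hf'f, comp_X, one_comp] using
      congrArg (comp · f) hg'
  simp only [arMul, Prod.mk.injEq, hgg', hf'f, and_true]
  rw [act_act hf₀ hf'₀, act_one, neg_comp, mul_neg, hgg', hf'f, act, comp_X, ha, map_one]
  have ha' := X_mul_shift_add_C a
  rw [ha, map_one] at ha'
  linear_combination -ha'

lemma inv_arMul (ha : coeff 0 a = 1) (hff' : comp f f' = X) (hg' : comp g f' * g' = 1) :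
    arMul (act 1 (-g') f' a, g', f') (a, g, f) = (1, 1, X) := by
  simp only [arMul, Prod.mk.injEq, mul_comm g', hg', hff', and_true]
  simp only [act, ha, map_one]
  ring

end Group

/-- the almost-Riordan arrays form a group: closure, associativity,
identity `(1,1,x)`, and inverses `(a,g,f)⁻¹ = ((1,−g,f)⁻¹·a, 1/(g∘f̄), f̄)`. -/
theorem statement7 :
    (∀ t s, isAR t → isAR s → isAR (arMul t s)) ∧
    (∀ t s r, isAR t → isAR s → isAR r →
      arMul (arMul t s) r = arMul t (arMul s r)) ∧
    isAR (1, 1, X) ∧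
    (∀ t, isAR t → arMul (1, 1, X) t = t ∧ arMul t (1, 1, X) = t) ∧
    (∀ t, isAR t → ∃ fi gi : PowerSeries ℤ,
      coeff 0 fi = 0 ∧ comp t.2.2 fi = X ∧ comp fi t.2.2 = X ∧
      comp t.2.1 fi * gi = 1 ∧
      isAR (act 1 (-gi) fi t.1, gi, fi) ∧
      arMul t (act 1 (-gi) fi t.1, gi, fi) = (1, 1, X) ∧
      arMul (act 1 (-gi) fi t.1, gi, fi) t = (1, 1, X)) := by
  refine ⟨fun _ _ => isAR_arMul, fun _ _ r ht hs _ => arMul_assoc ht.2.2.1 hs.2.2.1 r, isAR_one,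
    fun t ht => ⟨one_arMul t, arMul_one ht.2.2.1⟩, ?_⟩
  rintro ⟨a, g, f⟩ ⟨ha, hg, hf₀, hf₁⟩
  obtain ⟨f', hf'₀, hf'₁, hff', hf'f⟩ := exists_comp_inverse hf₀ hf₁
  have hunit : IsUnit (comp g f') := by
    rw [isUnit_iff_constantCoeff, ← coeff_zero_eq_constantCoeff_apply, coeff_zero_comp, hg]
    exact isUnit_one
  obtain ⟨g', hg'⟩ := hunit.exists_right_inv
  exact ⟨f', g', hf'₀, hff', hf'f, hg', isAR_inv ha hg hf'₀ hf'₁ hg',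
    arMul_inv ha hf₀ hf'₀ hf'f hg', inv_arMul ha hff' hg'⟩
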